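/- arXiv:2306.13019 — 2 statements merged into one kernel-verified Lean document; each statement's English description precedes it below -/
import Mathlib

section
/- For every Dyck word x of length 2n and every shift s ∈ {0,...,2n}, the vertex ⟨x,0,s⟩ lies on the f-orbit of ⟨x,0,0⟩; that is, there exists k ≥ 0 with f^k(⟨x,0,0⟩) = ⟨x,0,s⟩. -/
/-- Every prefix has at least as many 1s (`true`) as 0s (`false`). -/
def IsDyckPrefix (x : List Bool) : Prop :=
  ∀ p : List Bool, p <+: x → p.count false ≤ p.count true

/-- A (balanced) Dyck word. -/
def IsDyckWord (x : List Bool) : Prop :=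
  x.count true = x.count false ∧ IsDyckPrefix x

/-- A Dyck word of length `2*n` (so with `n` ones). -/
def DyckN (n : ℕ) (x : List Bool) : Prop :=
  x.length = 2 * n ∧ x.count true = n ∧ IsDyckPrefix x

/-- Cyclic right rotation by `s` steps. -/
def rotR (s : ℕ) (x : List Bool) : List Bool :=
  x.rotate (x.length - s % x.length)

/-- The map `f` on triples `⟨x,b,s⟩` (nut `x`, bit `b`, shift `s` mod `2n+1`),
relative to the tree rotation `r`:
`f ⟨x,0,s⟩ = ⟨r x, 1, s+1⟩` and `f ⟨x,1,s⟩ = ⟨x,0,s⟩`. -/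
def fmap (n : ℕ) (r : List Bool → List Bool) :
    List Bool × Bool × ℕ → List Bool × Bool × ℕ
  | (x, false, s) => (r x, true, (s + 1) % (2 * n + 1))
  | (x, true, s) => (x, false, s)

/-! Every Dyck word of length `2n` is a fixed point of `r^[2n]`, since `r^[|u|]` moves a Dyck
prefix `u` past the Dyck word behind it. Two steps of `f` from `⟨x,0,s⟩` apply `r` once and add
one to the shift, so `f^[2m] ⟨x,0,0⟩ = ⟨r^[m] x, 0, m mod (2n+1)⟩`; taking `m` a multiple of `2n`
keeps `x`, and the multiples of `2n ≡ -1` run through every residue mod `2n + 1`. -/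

open Function

lemma isDyckPrefix_iff_count_take {x : List Bool} :
    IsDyckPrefix x ↔ ∀ i, (x.take i).count false ≤ (x.take i).count true := by
  refine ⟨fun h i => h _ (x.take_prefix i), fun h p hp => ?_⟩
  rw [List.prefix_iff_eq_take.mp hp]
  exact h _

lemma DyckN.isDyckWord {n : ℕ} {x : List Bool} (hx : DyckN n x) : IsDyckWord x := by
  refine ⟨?_, hx.2.2⟩
  have := List.count_true_add_count_false x
  have := hx.1
  have := hx.2.1
  omega

def DyckStep.equivBool : DyckStep ≃ Bool where
  toFun
    | .U => true
    | .D => false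
  invFun
    | true => .U
    | false => .D
  left_inv s := by cases s <;> rfl
  right_inv b := by cases b <;> rfl

namespace DyckWord

open DyckStep

def toBoolList (p : DyckWord) : List Bool := p.toList.map equivBool

@[simp]
lemma toBoolList_zero : (0 : DyckWord).toBoolList = [] := rfl

@[simp]
lemma toBoolList_add (p q : DyckWord) : (p + q).toBoolList = p.toBoolList ++ q.toBoolList :=
  List.map_append ..

@[simp]
lemma toBoolList_nest (p : DyckWord) : p.nest.toBoolList = [true] ++ p.toBoolList ++ [false] := by
  simp only [toBoolList, nest, List.map_append]
  rfl

lemma isDyckWord_toBoolList (p : DyckWord) : IsDyckWord p.toBoolList := by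
  have hcount (s : DyckStep) (l : List DyckStep) :
      (l.map equivBool).count (equivBool s) = l.count s :=
    l.count_map_of_injective _ equivBool.injective s
  refine ⟨?_, isDyckPrefix_iff_count_take.mpr fun i => ?_⟩
  · exact (hcount U _).trans (p.count_U_eq_count_D.trans (hcount D _).symm)
  · rw [toBoolList, ← List.map_take]
    exact (hcount D _).trans_le ((p.count_D_le_count_U i).trans_eq (hcount U _).symm)

end DyckWord

lemma IsDyckWord.exists_toBoolList_eq {x : List Bool} (hx : IsDyckWord x) :
    ∃ p : DyckWord, p.toBoolList = x := by
  have hcount (b : Bool) (l : List Bool) :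
      (l.map DyckStep.equivBool.symm).count (DyckStep.equivBool.symm b) = l.count b :=
    l.count_map_of_injective _ DyckStep.equivBool.symm.injective b
  refine ⟨⟨x.map DyckStep.equivBool.symm, ?_, fun i => ?_⟩, ?_⟩
  · exact (hcount true x).trans (hx.1.trans (hcount false x).symm)
  · rw [← List.map_take]
    exact (hcount false _).trans_le
      ((isDyckPrefix_iff_count_take.mp hx.2 i).trans_eq (hcount true _).symm)
  · simp [DyckWord.toBoolList, List.map_map]

def IsTreeRotation (r : List Bool → List Bool) : Prop :=
  ∀ u v : List Bool, IsDyckWord u → IsDyckWord v →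
    r ([true] ++ u ++ [false] ++ v) = u ++ [true] ++ v ++ [false]

namespace IsTreeRotation

variable {r : List Bool → List Bool} (hr : IsTreeRotation r)
include hr

lemma apply_nest_add (p q : DyckWord) :
    r (p.nest + q).toBoolList = (p + q.nest).toBoolList := by
  simpa using hr _ _ p.isDyckWord_toBoolList q.isDyckWord_toBoolList

/-- With `p = (a) c`, the word `(a) c q` goes through `a (c q)`, `(c q) a`, `c q (a)`
and `q (a) c`. -/
theorem iterate_length_add (p q : DyckWord) :
    r^[p.toBoolList.length] (p + q).toBoolList = (q + p).toBoolList := by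
  induction h : p.semilength using Nat.strong_induction_on generalizing p q with
  | _ N ih =>
    obtain rfl | hp := eq_or_ne p 0
    · simp
    set a := p.insidePart
    set c := p.outsidePart
    have hsplit : a.nest + c = p := DyckWord.nest_insidePart_add_outsidePart hp
    have ha := ih _ (h ▸ DyckWord.semilength_insidePart_lt hp) a (c + q).nest rfl
    have hc := ih _ (h ▸ DyckWord.semilength_outsidePart_lt hp) c (q + a.nest) rfl
    have hlen : p.toBoolList.length = c.toBoolList.length + 1 + a.toBoolList.length + 1 := by
      rw [← hsplit]
      simp
      omega
    calc r^[p.toBoolList.length] (p + q).toBoolList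
        = r^[c.toBoolList.length]
            (r (r^[a.toBoolList.length] (r (a.nest + (c + q)).toBoolList))) := by
          rw [hlen, iterate_succ_apply, iterate_add_apply, iterate_succ_apply, ← hsplit,
            add_assoc]
      _ = (q + p).toBoolList := by
          rw [apply_nest_add hr, ha, apply_nest_add hr, add_assoc, hc, add_assoc, hsplit]

theorem isPeriodicPt_length {x : List Bool} (hx : IsDyckWord x) :
    IsPeriodicPt r x.length x := by
  obtain ⟨p, rfl⟩ := hx.exists_toBoolList_eq
  simpa [IsPeriodicPt, IsFixedPt] using hr.iterate_length_add p 0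

end IsTreeRotation

lemma fmap_iterate_two_mul (n : ℕ) (r : List Bool → List Bool) (x : List Bool) (m : ℕ) :
    (fmap n r)^[2 * m] (x, false, 0) = (r^[m] x, false, m % (2 * n + 1)) := by
  induction m with
  | zero => simp
  | succ m ih =>
    rw [Nat.mul_succ, add_comm, iterate_add_apply, ih]
    simp [fmap, iterate_succ_apply', Nat.mod_add_mod]

lemma mul_succ_sub_mod_succ {N s : ℕ} (hs : s ≤ N) : N * (N + 1 - s) % (N + 1) = s := by
  obtain ⟨d, rfl⟩ := Nat.exists_eq_add_of_le hs
  have hmul : (s + d) * (s + d + 1 - s) = (s + d + 1) * d + s := by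
    rw [show s + d + 1 - s = d + 1 by omega]
    ring
  rw [hmul, Nat.mul_add_mod, Nat.mod_eq_of_lt (by omega)]

theorem all_shifts_on_orbit_general (n : ℕ) (r : List Bool → List Bool)
    (hr : ∀ u v : List Bool, IsDyckWord u → IsDyckWord v →
      r ([true] ++ u ++ [false] ++ v) = u ++ [true] ++ v ++ [false])
    (x : List Bool) (hx : DyckN n x) (s : ℕ) (hs : s ≤ 2 * n) :
    ∃ k : ℕ, (fmap n r)^[k] (x, false, 0) = (x, false, s) := by
  have hper : IsPeriodicPt r (2 * n) x :=
    hx.1 ▸ IsTreeRotation.isPeriodicPt_length hr hx.isDyckWord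
  refine ⟨2 * (2 * n * (2 * n + 1 - s)), ?_⟩
  rw [fmap_iterate_two_mul, (hper.mul_const _).eq, mul_succ_sub_mod_succ hs]

/-- all shifts of a nut `x` lie on the `f`-orbit of `⟨x,0,0⟩`. -/
theorem all_shifts_on_orbit (n : ℕ) (hn : 1 ≤ n) (r : List Bool → List Bool)
    (hr : ∀ u v : List Bool, IsDyckWord u → IsDyckWord v →
      r ([true] ++ u ++ [false] ++ v) = u ++ [true] ++ v ++ [false])
    (x : List Bool) (hx : DyckN n x) (s : ℕ) (hs : s ≤ 2 * n) :
    ∃ k : ℕ, (fmap n r)^[k] (x, false, 0) = (x, false, s) :=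
  all_shifts_on_orbit_general n r hr x hx s hs
end

section
/- For any two distinct pullable Dyck words x ≠ x' of length 2n, the vertex sets S(x) and S(x') are disjoint, where S(x) := {f^i(⟨x,0,0⟩) : 0 ≤ i ≤ 6} ∪ {⟨p(x),0,0⟩, f(⟨p(x),0,0⟩)}. -/
/-- The nine vertices `S(x) = {fⁱ⟨x,0,0⟩ : 0 ≤ i ≤ 6} ∪ {⟨p(x),0,0⟩, f⟨p(x),0,0⟩}`
touched by the gluing 6-cycle of the pullable word `x`, where `px = p(x)`. -/
def glueSet (n : ℕ) (r : List Bool → List Bool) (x px : List Bool) :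
    Set (List Bool × Bool × ℕ) :=
  {p | ∃ i ≤ 6, (fmap n r)^[i] (x, false, 0) = p} ∪
    {(px, false, 0), fmap n r (px, false, 0)}

/-!
Write the pullable word as `x = 110t` with `t = u0v`, and let `w = u1v0 = r(1u0v)`. Then
`r x = 10w`, `r² x = 1w0`, `r³ x = w10`, `p x = 101t` and `r (p x) = 11t0`, so the shifts
`0, 1, 2, 3` occurring in `S(x)` are distinct modulo `2n + 1` (as `n ≥ 2`). Words of `S(x)` and
`S(x')` with the same shift and bit either differ in their first two letters or are the same
expression in `t` or in `w`, so a common vertex forces `t = t'` or `w = w'`. Either gives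
`x = x'`, the second because `u1v0` determines the Dyck words `u` and `v`.
-/

lemma List.IsPrefix.append_cases {α : Type*} {p a b : List α} (h : p <+: a ++ b) :
    p <+: a ∨ ∃ q, q <+: b ∧ p = a ++ q := by
  by_cases hl : p.length ≤ a.length
  · exact Or.inl (List.prefix_of_prefix_length_le h (List.prefix_append a b) hl)
  · obtain ⟨q, rfl⟩ := List.prefix_of_prefix_length_le (List.prefix_append a b) h (by omega)
    exact Or.inr ⟨q, (List.prefix_append_right_inj a).1 h, rfl⟩

lemma IsDyckPrefix.of_prefix {x y : List Bool} (hy : IsDyckPrefix y) (hxy : x <+: y) :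
    IsDyckPrefix x :=
  fun p hp => hy p (hp.trans hxy)

lemma isDyckWord_nil : IsDyckWord [] := ⟨rfl, fun p hp => by simp [List.prefix_nil.1 hp]⟩

lemma IsDyckWord.append {a b : List Bool} (ha : IsDyckWord a) (hb : IsDyckWord b) :
    IsDyckWord (a ++ b) := by
  refine ⟨by simp [ha.1, hb.1], fun p hp => ?_⟩
  rcases hp.append_cases with h | ⟨q, hq, rfl⟩
  · exact ha.2 p h
  · have := hb.2 q hq
    have := ha.1
    simp only [List.count_append]
    omega

lemma IsDyckWord.wrap {u : List Bool} (hu : IsDyckWord u) :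
    IsDyckWord ([true] ++ u ++ [false]) := by
  refine ⟨by simp [hu.1], fun p hp => ?_⟩
  rw [List.append_assoc, List.singleton_append, List.prefix_cons_iff] at hp
  rcases hp with rfl | ⟨t, rfl, ht⟩
  · simp
  rcases List.prefix_concat_iff.1 ht with rfl | ht
  · simp [hu.1]
  · have := hu.2 t ht
    simp only [List.count_cons_self, List.count_cons_of_ne (by decide : true ≠ false)]
    omega

lemma count_true_append_true_ne {u w : List Bool} (hu : u.count true = u.count false)
    (hw : IsDyckPrefix w) : (u ++ true :: w).count true ≠ (u ++ true :: w).count false := by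
  have := hw w (List.prefix_refl w)
  simp only [List.count_append, List.count_cons_self,
    List.count_cons_of_ne (by decide : true ≠ false)]
  omega

-- `u` is the longest balanced prefix of `u 1 v`: after it the height stays positive.
lemma append_true_append_inj {u v u' v' : List Bool} (hu : u.count true = u.count false)
    (hu' : u'.count true = u'.count false) (hv : IsDyckPrefix v) (hv' : IsDyckPrefix v')
    (h : u ++ [true] ++ v = u' ++ [true] ++ v') : u = u' ∧ v = v' := by
  simp only [List.append_assoc, List.singleton_append] at h
  rcases List.append_eq_append_iff.1 h with ⟨a, rfl, ha⟩ | ⟨a, rfl, ha⟩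
  · rcases a with _ | ⟨b, a⟩
    · simpa using ha
    · obtain ⟨rfl, rfl⟩ : b = true ∧ v = a ++ true :: v' := by simpa using ha
      exact absurd hu' (count_true_append_true_ne hu (hv.of_prefix (List.prefix_append _ _)))
  · rcases a with _ | ⟨b, a⟩
    · simpa using ha.symm
    · obtain ⟨rfl, rfl⟩ : b = true ∧ v' = a ++ true :: v := by simpa using ha
      exact absurd hu (count_true_append_true_ne hu' (hv'.of_prefix (List.prefix_append _ _)))

lemma glueSet_eq {n : ℕ} (hn : 2 ≤ n) (r : List Bool → List Bool) (x px : List Bool) :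
    glueSet n r x px = {(x, false, 0), (r x, true, 1), (r x, false, 1), (r (r x), true, 2),
      (r (r x), false, 2), (r (r (r x)), true, 3), (r (r (r x)), false, 3),
      (px, false, 0), (r px, true, 1)} := by
  ext a
  simp (disch := omega) only [glueSet, ← Nat.lt_succ_iff, Nat.exists_lt_succ_left,
    Nat.not_lt_zero, false_and, exists_false, or_false, Function.iterate_succ_apply,
    Function.iterate_zero_apply, fmap, Nat.mod_eq_of_lt, Set.mem_ofPred_eq, Set.mem_union,
    Set.mem_insert_iff, Set.mem_singleton_iff, @eq_comm _ _ a, or_assoc]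

def pullableGlueSet (t w : List Bool) : Set (List Bool × Bool × ℕ) :=
  {([true, true, false] ++ t, false, 0), ([true, false] ++ w, true, 1),
    ([true, false] ++ w, false, 1), ([true] ++ w ++ [false], true, 2),
    ([true] ++ w ++ [false], false, 2), (w ++ [true, false], true, 3),
    (w ++ [true, false], false, 3), ([true, false, true] ++ t, false, 0),
    ([true, true] ++ t ++ [false], true, 1)}

lemma glueSet_pullable {r : List Bool → List Bool}
    (hr : ∀ u v : List Bool, IsDyckWord u → IsDyckWord v →
      r ([true] ++ u ++ [false] ++ v) = u ++ [true] ++ v ++ [false])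
    {n : ℕ} (hn : 2 ≤ n) {u v : List Bool} (hu : IsDyckWord u) (hv : IsDyckWord v) :
    glueSet n r ([true, true, false] ++ u ++ [false] ++ v)
        ([true, false, true] ++ u ++ [false] ++ v) =
      pullableGlueSet (u ++ [false] ++ v) (u ++ [true] ++ v ++ [false]) := by
  set w := u ++ [true] ++ v ++ [false] with hw_def
  have hw : IsDyckWord w := by simpa [hw_def] using hu.append hv.wrap
  have hrx : r ([true, true, false] ++ u ++ [false] ++ v) = [true, false] ++ w := by
    simpa [hw_def] using hr ([true, false] ++ u) v (isDyckWord_nil.wrap.append hu) hv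
  have hr2x : r ([true, false] ++ w) = [true] ++ w ++ [false] := by
    simpa using hr [] w isDyckWord_nil hw
  have hr3x : r ([true] ++ w ++ [false]) = w ++ [true, false] := by
    simpa using hr w [] hw isDyckWord_nil
  have hrpx : r ([true, false, true] ++ u ++ [false] ++ v) =
      [true, true] ++ (u ++ [false] ++ v) ++ [false] := by
    simpa using hr [] ([true] ++ u ++ [false] ++ v) isDyckWord_nil (hu.wrap.append hv)
  rw [glueSet_eq hn, hrx, hr2x, hr3x, hrpx]
  rfl

lemma pullableGlueSet_disjoint {t t' w w' : List Bool} (ht : t ≠ t') (hw : w ≠ w') :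
    Disjoint (pullableGlueSet t w) (pullableGlueSet t' w') := by
  simp [pullableGlueSet, Set.disjoint_left, ht, hw]

theorem glue_sets_disjoint_general (n : ℕ) (r : List Bool → List Bool)
    (hr : ∀ u v : List Bool, IsDyckWord u → IsDyckWord v →
      r ([true] ++ u ++ [false] ++ v) = u ++ [true] ++ v ++ [false])
    (u v u' v' : List Bool)
    (hu : IsDyckWord u) (hv : IsDyckWord v) (hu' : IsDyckWord u') (hv' : IsDyckWord v')
    (hx : DyckN n ([true, true, false] ++ u ++ [false] ++ v))
    (hne : [true, true, false] ++ u ++ [false] ++ v ≠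
      [true, true, false] ++ u' ++ [false] ++ v') :
    Disjoint
      (glueSet n r ([true, true, false] ++ u ++ [false] ++ v)
        ([true, false, true] ++ u ++ [false] ++ v))
      (glueSet n r ([true, true, false] ++ u' ++ [false] ++ v')
        ([true, false, true] ++ u' ++ [false] ++ v')) := by
  have hn : 2 ≤ n := by
    have := hx.1
    simp only [List.length_append, List.length_cons, List.length_nil] at this
    omega
  have ht : u ++ [false] ++ v ≠ u' ++ [false] ++ v' := by
    intro h
    simp only [List.append_assoc] at h hne
    exact hne (by rw [h])
  have hw : u ++ [true] ++ v ++ [false] ≠ u' ++ [true] ++ v' ++ [false] := by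
    intro h
    obtain ⟨rfl, rfl⟩ :=
      append_true_append_inj hu.1 hu'.1 hv.2 hv'.2 (List.append_cancel_right h)
    exact ht rfl
  rw [glueSet_pullable hr hn hu hv, glueSet_pullable hr hn hu' hv']
  exact pullableGlueSet_disjoint ht hw

/-- for distinct pullable Dyck words `x = 110u0v ≠ x' = 110u'0v'` of
length `2n`, the vertex sets `S(x)` and `S(x')` are disjoint. -/
theorem glue_sets_disjoint (n : ℕ) (r : List Bool → List Bool)
    (hr : ∀ u v : List Bool, IsDyckWord u → IsDyckWord v →
      r ([true] ++ u ++ [false] ++ v) = u ++ [true] ++ v ++ [false])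
    (u v u' v' : List Bool)
    (hu : IsDyckWord u) (hv : IsDyckWord v) (hu' : IsDyckWord u') (hv' : IsDyckWord v')
    (hx : DyckN n ([true, true, false] ++ u ++ [false] ++ v))
    (hx' : DyckN n ([true, true, false] ++ u' ++ [false] ++ v'))
    (hne : [true, true, false] ++ u ++ [false] ++ v ≠
      [true, true, false] ++ u' ++ [false] ++ v') :
    Disjoint
      (glueSet n r ([true, true, false] ++ u ++ [false] ++ v)
        ([true, false, true] ++ u ++ [false] ++ v))
      (glueSet n r ([true, true, false] ++ u' ++ [false] ++ v')
        ([true, false, true] ++ u' ++ [false] ++ v')) :=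
  glue_sets_disjoint_general n r hr u v u' v' hu hv hu' hv' hx hne
end
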